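/- Fix a real ω with 2 ≤ ω ≤ 3. Then for every integer k ≥ 2, one has k·(ω − 2) ≤ α_k. -/

import Mathlib

/-- `x_k = k * ∏_{j=2}^{k} ((5-2j)+(j-2)ω)`. -/
noncomputable def xk (ω : ℝ) (k : ℕ) : ℝ :=
  (k : ℝ) * ∏ j ∈ Finset.Icc 2 k, ((5 - 2 * (j : ℝ)) + ((j : ℝ) - 2) * ω)

/-- `y_k = (3-ω)^{k-2} + ∑_{j=2}^{k-1} (3-ω)^{k-1-j} x_j`. -/
noncomputable def yk (ω : ℝ) (k : ℕ) : ℝ :=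
  (3 - ω) ^ (k - 2) + ∑ j ∈ Finset.Icc 2 (k - 1), (3 - ω) ^ (k - 1 - j) * xk ω j

/-- `α_k = x_k / y_k`. -/
noncomputable def alphak (ω : ℝ) (k : ℕ) : ℝ := xk ω k / yk ω k

/-!
Both sequences satisfy first-order recurrences,
`k x_{k+1} = (k+1)((3-2k)+(k-1)ω) x_k` and `y_{k+1} = (3-ω) y_k + x_k`,
under which the defect `x_k - k(ω-2) y_k` gets multiplied by `(k+1)(3-ω)/k`.
Hence `x_k - k(ω-2) y_k = k(3-ω)^{k-1}`, which is nonnegative for `ω ≤ 3`,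
and `y_k > 0` for `2 ≤ ω ≤ 3` lets us divide.
-/

lemma xk_two (ω : ℝ) : xk ω 2 = 2 := by
  norm_num [xk]

lemma yk_two (ω : ℝ) : yk ω 2 = 1 := by
  simp [yk]

lemma natCast_mul_xk_succ (ω : ℝ) (k : ℕ) :
    k * xk ω (k + 1) = (k + 1) * ((3 - 2 * k) + (k - 1) * ω) * xk ω k := by
  rcases Nat.eq_zero_or_pos k with rfl | hk
  · simp [xk]
  rw [xk, xk, Finset.prod_Icc_succ_top (by omega : 2 ≤ k + 1)]
  push_cast
  ring

lemma yk_succ (ω : ℝ) {k : ℕ} (hk : 2 ≤ k) :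
    yk ω (k + 1) = (3 - ω) * yk ω k + xk ω k := by
  obtain ⟨m, rfl⟩ : ∃ m, k = m + 1 := ⟨k - 1, by omega⟩
  have hshift : ∀ j ∈ Finset.Icc 2 m,
      (3 - ω) ^ (m + 1 - j) * xk ω j = (3 - ω) * ((3 - ω) ^ (m - j) * xk ω j) := by
    intro j hj
    rw [Nat.sub_add_comm (Finset.mem_Icc.mp hj).2, pow_succ]
    ring
  rw [yk, yk, Nat.add_sub_cancel, Nat.add_sub_cancel, Nat.sub_add_comm (by omega : 2 ≤ m + 1),
    Finset.sum_Icc_succ_top (by omega : 2 ≤ m + 1), Finset.sum_congr rfl hshift,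
    ← Finset.mul_sum, Nat.sub_self, pow_zero, pow_succ]
  ring

lemma natCast_mul_defect_succ (ω : ℝ) {k : ℕ} (hk : 2 ≤ k) :
    k * (xk ω (k + 1) - (k + 1 : ℕ) * (ω - 2) * yk ω (k + 1))
      = (k + 1) * (3 - ω) * (xk ω k - k * (ω - 2) * yk ω k) := by
  rw [mul_sub, natCast_mul_xk_succ, yk_succ ω hk]
  push_cast
  ring

lemma xk_sub_mul_yk (ω : ℝ) {k : ℕ} (hk : 2 ≤ k) :
    xk ω k - k * (ω - 2) * yk ω k = k * (3 - ω) ^ (k - 1) := by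
  induction k, hk using Nat.le_induction with
  | base => rw [xk_two, yk_two]; ring
  | succ k hk ih =>
    have hk0 : (k : ℝ) ≠ 0 := by positivity
    refine mul_left_cancel₀ hk0 ?_
    rw [natCast_mul_defect_succ ω hk, ih, Nat.add_sub_cancel,
      ← pow_sub_one_mul (by omega : k ≠ 0)]
    push_cast
    ring

lemma xk_pos {ω : ℝ} (hω : 2 ≤ ω) {k : ℕ} (hk : 1 ≤ k) : 0 < xk ω k := by
  refine mul_pos (by exact_mod_cast hk) (Finset.prod_pos fun j hj => ?_)
  have hj : (2 : ℝ) ≤ j := by exact_mod_cast (Finset.mem_Icc.mp hj).1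
  nlinarith

lemma yk_pos {ω : ℝ} (hω2 : 2 ≤ ω) (hω3 : ω ≤ 3) {k : ℕ} (hk : 2 ≤ k) : 0 < yk ω k := by
  induction k, hk using Nat.le_induction with
  | base => rw [yk_two]; exact one_pos
  | succ k hk ih =>
    rw [yk_succ ω hk]
    exact add_pos_of_nonneg_of_pos (mul_nonneg (by linarith) ih.le) (xk_pos hω2 (by omega))

theorem alphak_lower_bound (ω : ℝ) (hω2 : 2 ≤ ω) (hω3 : ω ≤ 3) (k : ℕ) (hk : 2 ≤ k) :
    (k : ℝ) * (ω - 2) ≤ alphak ω k := by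
  rw [alphak, le_div_iff₀ (yk_pos hω2 hω3 hk), ← sub_nonneg, xk_sub_mul_yk ω hk]
  exact mul_nonneg k.cast_nonneg (pow_nonneg (sub_nonneg.mpr hω3) _)
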